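/- Let D be a quasi-symmetric design with block intersection numbers x and y, and G an automorphism group acting with f fixed points, h fixed blocks, and all other point and block orbits of the same size ω. If a prime p divides ω, y−x, and k−x, then the columns of the non-fixed part of the point orbit matrix (the submatrix indexed by non-fixed point orbits and non-fixed block orbits) span a self-orthogonal code over F_p. -/

import Mathlib

open Finset

/-!
Count the triples `(q, a, a')` with `a` in the block orbit `O`, `a'` in the block orbit `O'` and
`q ∈ B a ∩ B a'` in two ways. Grouping the points into orbits gives
`ω · ∑_{i non-fixed} γ_{iO} γ_{iO'} + ∑_{i fixed} γ_{iO} γ_{iO'}`, and each fixed-point term is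
`0` or `ω²`. Grouping the block pairs by their intersection size gives
`x ω² + (y - x) R + (k - x) #(O ∩ O')`, where `R` is a multiple of `ω` because the number of
blocks of `O'` meeting a given block of `O` in `y` points is constant along `O`, and
`#(O ∩ O')` is `ω` or `0`. Hence `p ω` divides the total and the fixed-point part, so `p` divides
the non-fixed sum, which is the inner product of the two columns; bilinearity passes this on to
their span.
-/

def IsOrbit {G α : Type*} [Group G] (ρ : G →* Equiv.Perm α) (O : Finset α) : Prop :=
  ∃ pt, ∀ q, q ∈ O ↔ ∃ g, ρ g pt = q

namespace IsOrbit

variable {G α : Type*} [Group G] {ρ : G →* Equiv.Perm α} {O : Finset α}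

theorem apply_mem_iff (hO : IsOrbit ρ O) (g : G) {q : α} : ρ g q ∈ O ↔ q ∈ O := by
  obtain ⟨pt, hpt⟩ := hO
  refine ⟨fun h => ?_, fun h => ?_⟩
  · obtain ⟨h', hh'⟩ := (hpt _).1 h
    exact (hpt q).2 ⟨g⁻¹ * h', by simp [hh']⟩
  · obtain ⟨h', rfl⟩ := (hpt q).1 h
    exact (hpt _).2 ⟨g * h', by simp⟩

theorem exists_apply_eq (hO : IsOrbit ρ O) {q q' : α} (hq : q ∈ O) (hq' : q' ∈ O) :
    ∃ g, ρ g q = q' := by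
  obtain ⟨pt, hpt⟩ := hO
  obtain ⟨g, rfl⟩ := (hpt q).1 hq
  obtain ⟨g', rfl⟩ := (hpt q').1 hq'
  exact ⟨g' * g⁻¹, by simp⟩

theorem nonempty (hO : IsOrbit ρ O) : O.Nonempty := by
  obtain ⟨pt, hpt⟩ := hO
  exact ⟨pt, (hpt pt).2 ⟨1, by simp⟩⟩

theorem eq_or_disjoint (hO : IsOrbit ρ O) {O' : Finset α} (hO' : IsOrbit ρ O') :
    O = O' ∨ Disjoint O O' := by
  refine or_iff_not_imp_right.2 fun h => ?_
  obtain ⟨c, hc, hc'⟩ := not_disjoint_iff.1 h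
  ext q
  constructor <;> intro hq
  · obtain ⟨g, rfl⟩ := hO.exists_apply_eq hc hq
    exact (hO'.apply_mem_iff g).2 hc'
  · obtain ⟨g, rfl⟩ := hO'.exists_apply_eq hc' hq
    exact (hO.apply_mem_iff g).2 hc

theorem apply_eq_self_of_card_eq_one (hO : IsOrbit ρ O) (h1 : #O = 1) {q : α} (hq : q ∈ O)
    (g : G) : ρ g q = q :=
  card_le_one.1 h1.le _ ((hO.apply_mem_iff g).2 hq) _ hq

theorem card_filter_apply (hO : IsOrbit ρ O) (g : G) (P : α → Prop) [DecidablePred P] :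
    #{q ∈ O | P (ρ g q)} = #{q ∈ O | P q} :=
  card_equiv (ρ g) fun q => by simp only [mem_filter, hO.apply_mem_iff]

theorem card_dvd_sum {M : Type*} [CommSemiring M] (hO : IsOrbit ρ O) {f : α → M}
    (hf : ∀ g q, f (ρ g q) = f q) : (#O : M) ∣ ∑ q ∈ O, f q := by
  obtain ⟨pt, hpt⟩ := hO
  have : ∀ q ∈ O, f q = f pt := fun q hq => by
    obtain ⟨g, rfl⟩ := (hpt q).1 hq
    exact hf g pt
  rw [sum_congr rfl this, sum_const, nsmul_eq_mul]
  exact dvd_mul_right _ _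

end IsOrbit

theorem dotProduct_eq_zero_of_mem_span {R ι κ : Type*} [CommSemiring R] [Fintype κ]
    {c : ι → κ → R} (hc : ∀ j s, c j ⬝ᵥ c s = 0) {u w : κ → R}
    (hu : u ∈ Submodule.span R (Set.range c)) (hw : w ∈ Submodule.span R (Set.range c)) :
    u ⬝ᵥ w = 0 := by
  induction hu, hw using Submodule.span_induction₂ with
  | mem_mem _ _ hu hw =>
    obtain ⟨j, rfl⟩ := hu
    obtain ⟨s, rfl⟩ := hw
    exact hc j s
  | zero_left => simp
  | zero_right => simp
  | add_left _ _ _ _ _ _ h₁ h₂ => simp [add_dotProduct, h₁, h₂]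
  | add_right _ _ _ _ _ _ h₁ h₂ => simp [dotProduct_add, h₁, h₂]
  | smul_left _ _ _ _ _ h => simp [smul_dotProduct, h]
  | smul_right _ _ _ _ _ h => simp [dotProduct_smul, h]

def incidenceCount {α β : Type*} [DecidableEq α] (B : β → Finset α) (O : Finset β) (q : α) : ℕ :=
  #{a ∈ O | q ∈ B a}

theorem card_inter_eq_sum_indicator_mul {α : Type*} [Fintype α] [DecidableEq α] (s t : Finset α) :
    #(s ∩ t) = ∑ q, (if q ∈ s then 1 else 0) * (if q ∈ t then 1 else 0) := by
  simp only [ite_zero_mul_ite_zero, one_mul, sum_boole, ← mem_inter, filter_mem_eq_inter,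
    univ_inter, Nat.cast_id]

theorem sum_sum_card_inter_eq_sum_incidenceCount_mul {α β : Type*} [Fintype α] [DecidableEq α]
    (B : β → Finset α) (O O' : Finset β) :
    ∑ a ∈ O, ∑ a' ∈ O', #(B a ∩ B a') = ∑ q, incidenceCount B O q * incidenceCount B O' q := by
  simp only [incidenceCount, card_filter, sum_mul_sum, card_inter_eq_sum_indicator_mul]
  rw [Finset.sum_comm (s := univ)]
  exact sum_congr rfl fun a _ => Finset.sum_comm

theorem sum_sum_card_inter_of_quasiSymmetric {α β : Type*} [DecidableEq α] [DecidableEq β]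
    {B : β → Finset α} {k x y : ℕ} (hk : ∀ a, #(B a) = k)
    (hqs : ∀ a a', a ≠ a' → #(B a ∩ B a') = x ∨ #(B a ∩ B a') = y) (hxy : x ≤ y) (hxk : x ≤ k)
    (O O' : Finset β) :
    ∑ a ∈ O, ∑ a' ∈ O', #(B a ∩ B a') = x * (#O * #O') +
      (y - x) * ∑ a ∈ O, #{a' ∈ O' | a ≠ a' ∧ #(B a ∩ B a') = y} + (k - x) * #(O ∩ O') := by
  have hterm : ∀ a a', #(B a ∩ B a') = x + (y - x) * (if a ≠ a' ∧ #(B a ∩ B a') = y then 1 else 0)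
      + (k - x) * (if a = a' then 1 else 0) := by
    intro a a'
    by_cases hd : a = a'
    · simp [hd, hk]
      omega
    · rcases hqs a a' hd with h | h
      · by_cases hxy' : x = y <;> simp [hd, h, hxy']
      · simp [hd, h]
        omega
  rw [sum_congr rfl fun a _ => sum_congr rfl fun a' _ => hterm a a']
  simp only [sum_add_distrib, ← mul_sum, sum_const, smul_eq_mul]
  simp only [sum_ite_eq]
  simp only [sum_boole, Nat.cast_id, filter_mem_eq_inter]
  ring

theorem Finset.sum_eq_sum_card_nsmul_of_partition {ι α M : Type*} [Fintype ι] [Fintype α]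
    [DecidableEq α] [AddCommMonoid M] {P : ι → Finset α} (hcov : ∀ q, ∃ i, q ∈ P i)
    (hdisj : ∀ i i', i ≠ i' → Disjoint (P i) (P i')) {f : α → M} {rep : ι → α}
    (hf : ∀ i, ∀ q ∈ P i, f q = f (rep i)) : ∑ q, f q = ∑ i, #(P i) • f (rep i) := by
  have huniv : (univ : Finset α) = univ.biUnion P := by
    ext q
    obtain ⟨i, hi⟩ := hcov q
    simpa using ⟨i, hi⟩
  rw [huniv, sum_biUnion fun i _ i' _ => hdisj i i']
  exact sum_congr rfl fun i _ => by rw [sum_congr rfl (hf i), sum_const]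

section Automorphism

variable {G α β : Type*} [Group G] [DecidableEq α] {ρ : G →* Equiv.Perm α}
  {σ : G →* Equiv.Perm β} {B : β → Finset α}

theorem apply_mem_apply_iff (hB : ∀ g a, B (σ g a) = (B a).image (ρ g)) (g : G) (q : α) (a : β) :
    ρ g q ∈ B (σ g a) ↔ q ∈ B a := by
  rw [hB, (ρ g).injective.mem_finset_image]

theorem card_inter_apply (hB : ∀ g a, B (σ g a) = (B a).image (ρ g)) (g : G) (a a' : β) :
    #(B (σ g a) ∩ B (σ g a')) = #(B a ∩ B a') := by
  rw [hB, hB, ← image_inter _ _ (ρ g).injective, card_image_of_injective _ (ρ g).injective]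

theorem incidenceCount_apply (hB : ∀ g a, B (σ g a) = (B a).image (ρ g)) {O : Finset β}
    (hO : IsOrbit σ O) (g : G) (q : α) : incidenceCount B O (ρ g q) = incidenceCount B O q := by
  rw [incidenceCount, ← hO.card_filter_apply g]
  simp only [apply_mem_apply_iff hB]
  rfl

theorem incidenceCount_eq_of_mem_orbit (hB : ∀ g a, B (σ g a) = (B a).image (ρ g))
    {O : Finset β} (hO : IsOrbit σ O) {P : Finset α} (hP : IsOrbit ρ P) {q q' : α} (hq : q ∈ P)
    (hq' : q' ∈ P) : incidenceCount B O q = incidenceCount B O q' := by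
  obtain ⟨g, rfl⟩ := hP.exists_apply_eq hq' hq
  exact incidenceCount_apply hB hO g q'

theorem incidenceCount_eq_zero_or_card (hB : ∀ g a, B (σ g a) = (B a).image (ρ g))
    {O : Finset β} (hO : IsOrbit σ O) {q : α} (hq : ∀ g, ρ g q = q) :
    incidenceCount B O q = 0 ∨ incidenceCount B O q = #O := by
  rcases eq_empty_or_nonempty {a ∈ O | q ∈ B a} with h | ⟨a, ha⟩
  · exact Or.inl (card_eq_zero.2 h)
  · rw [mem_filter] at ha
    refine Or.inr (congrArg card (filter_true_of_mem fun c hc => ?_))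
    obtain ⟨g, rfl⟩ := hO.exists_apply_eq ha.1 hc
    rw [← hq g, apply_mem_apply_iff hB]
    exact ha.2

theorem sum_sum_card_inter_eq_orbit_sum (hB : ∀ g a, B (σ g a) = (B a).image (ρ g))
    [Fintype α] {ι : Type*} [Fintype ι] {P : ι → Finset α} (hP : ∀ i, IsOrbit ρ (P i))
    (hcov : ∀ q, ∃ i, q ∈ P i) (hdisj : ∀ i i', i ≠ i' → Disjoint (P i) (P i')) {ω : ℕ}
    (hPsize : ∀ i, #(P i) = 1 ∨ #(P i) = ω) {rep : ι → α} (hrep : ∀ i, rep i ∈ P i)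
    {O O' : Finset β} (hO : IsOrbit σ O) (hO' : IsOrbit σ O') :
    ∑ a ∈ O, ∑ a' ∈ O', #(B a ∩ B a') =
      ω * ∑ i with #(P i) = ω, incidenceCount B O (rep i) * incidenceCount B O' (rep i) +
        ∑ i with #(P i) ≠ ω, incidenceCount B O (rep i) * incidenceCount B O' (rep i) := by
  rw [sum_sum_card_inter_eq_sum_incidenceCount_mul,
    sum_eq_sum_card_nsmul_of_partition hcov hdisj fun i q hq => by
      rw [incidenceCount_eq_of_mem_orbit hB hO (hP i) hq (hrep i),
        incidenceCount_eq_of_mem_orbit hB hO' (hP i) hq (hrep i)],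
    ← sum_filter_add_sum_filter_not univ (fun i => #(P i) = ω), mul_sum]
  congr 1
  · exact sum_congr rfl fun i hi => by rw [(mem_filter.1 hi).2, smul_eq_mul]
  · exact sum_congr rfl fun i hi => by
      rw [(hPsize i).resolve_right (mem_filter.1 hi).2, one_smul]

theorem card_dvd_sum_card_filter_card_inter_eq (hB : ∀ g a, B (σ g a) = (B a).image (ρ g))
    [DecidableEq β] {O O' : Finset β} (hO : IsOrbit σ O) (hO' : IsOrbit σ O') (y : ℕ) :
    #O ∣ ∑ a ∈ O, #{a' ∈ O' | a ≠ a' ∧ #(B a ∩ B a') = y} := by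
  refine Nat.cast_id #O ▸ hO.card_dvd_sum fun g a => ?_
  rw [← hO'.card_filter_apply g]
  simp only [(σ g).injective.ne_iff, card_inter_apply hB]

theorem dvd_sum_incidenceCount_mul_of_quasiSymmetric
    (hB : ∀ g a, B (σ g a) = (B a).image (ρ g)) [Fintype α] [DecidableEq β]
    {k x y ω p : ℕ} (hk : ∀ a, #(B a) = k)
    (hqs : ∀ a a', a ≠ a' → #(B a ∩ B a') = x ∨ #(B a ∩ B a') = y) (hxy : x ≤ y)
    (hpω : p ∣ ω) (hpyx : p ∣ y - x) (hpkx : p ∣ k - x)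
    {ι : Type*} [Fintype ι] {P : ι → Finset α} (hP : ∀ i, IsOrbit ρ (P i))
    (hcov : ∀ q, ∃ i, q ∈ P i) (hdisj : ∀ i i', i ≠ i' → Disjoint (P i) (P i'))
    (hPsize : ∀ i, #(P i) = 1 ∨ #(P i) = ω) {rep : ι → α} (hrep : ∀ i, rep i ∈ P i)
    {O O' : Finset β} (hO : IsOrbit σ O) (hO' : IsOrbit σ O') (hOω : #O = ω) (hO'ω : #O' = ω) :
    p ∣ ∑ i with #(P i) = ω, incidenceCount B O (rep i) * incidenceCount B O' (rep i) := by
  set γ := fun i => incidenceCount B O (rep i) * incidenceCount B O' (rep i)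
  -- `x ≤ k` needs two distinct blocks in `O`; when `ω = 1` instead, `p = 1`.
  obtain hω | hω : ω = 1 ∨ 2 ≤ ω := by
    have := hO.nonempty.card_pos
    omega
  · subst hω
    rw [Nat.dvd_one.1 hpω]
    exact one_dvd _
  have hxk : x ≤ k := by
    obtain ⟨a, -, a', -, hne⟩ := one_lt_card.1 (hOω ▸ hω : 1 < #O)
    have := card_le_card (inter_subset_left (s₁ := B a) (s₂ := B a'))
    rcases hqs a a' hne with h | h <;> rw [hk] at this <;> omega
  have hS : p * ω ∣ ∑ a ∈ O, ∑ a' ∈ O', #(B a ∩ B a') := by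
    rw [sum_sum_card_inter_of_quasiSymmetric hk hqs hxy hxk, hOω, hO'ω]
    refine dvd_add (dvd_add ?_ ?_) ?_
    · exact dvd_mul_of_dvd_right (mul_dvd_mul hpω dvd_rfl) x
    · exact mul_dvd_mul hpyx (hOω ▸ card_dvd_sum_card_filter_card_inter_eq hB hO hO' y)
    · refine mul_dvd_mul hpkx ?_
      rcases hO.eq_or_disjoint hO' with rfl | h
      · rw [inter_self, hOω]
      · rw [disjoint_iff_inter_eq_empty.1 h, card_empty]
        exact dvd_zero _
  have hF : p * ω ∣ ∑ i with #(P i) ≠ ω, γ i := by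
    refine dvd_sum fun i hi => ?_
    have hfix := (hP i).apply_eq_self_of_card_eq_one
      ((hPsize i).resolve_right (mem_filter.1 hi).2) (hrep i)
    rcases incidenceCount_eq_zero_or_card hB hO hfix with h | h <;>
    rcases incidenceCount_eq_zero_or_card hB hO' hfix with h' | h' <;>
    simp [γ, h, h', hOω, hO'ω, mul_dvd_mul hpω dvd_rfl]
  rw [sum_sum_card_inter_eq_orbit_sum hB hP hcov hdisj hPsize hrep hO hO', Nat.dvd_add_left hF,
    mul_comm p] at hS
  exact Nat.dvd_of_mul_dvd_mul_left (by omega) hS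

end Automorphism

theorem stmt14_general (v b m n k x y ω p : ℕ) (hxy : x < y)
    (hpω : p ∣ ω) (hpyx : p ∣ y - x) (hpkx : p ∣ k - x)
    (B : Fin b → Finset (Fin v))
    (hk : ∀ a, (B a).card = k)
    (hqs : ∀ a a', a ≠ a' → (B a ∩ B a').card = x ∨ (B a ∩ B a').card = y)
    (G : Subgroup (Equiv.Perm (Fin v)))
    (σ : G →* Equiv.Perm (Fin b))
    (hσ : ∀ (g : G) (a : Fin b), B (σ g a) = (B a).image (g : Equiv.Perm (Fin v)))
    (PO : Fin m → Finset (Fin v))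
    (hPOorb : ∀ i, ∃ pt, ∀ q, q ∈ PO i ↔ ∃ g : G, (g : Equiv.Perm (Fin v)) pt = q)
    (hPOcov : ∀ pt, ∃ i, pt ∈ PO i)
    (hPOdisj : ∀ i i', i ≠ i' → Disjoint (PO i) (PO i'))
    (hPOsize : ∀ i, (PO i).card = 1 ∨ (PO i).card = ω)
    (BO : Fin n → Finset (Fin b))
    (hBOorb : ∀ j, ∃ a, ∀ c, c ∈ BO j ↔ ∃ g : G, σ g a = c)
    (rep : Fin m → Fin v) (hrep : ∀ i, rep i ∈ PO i)
    (colNF : {j : Fin n // (BO j).card = ω} →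
      ({i : Fin m // (PO i).card = ω} → ZMod p))
    (hcol : ∀ j i, colNF j i =
      (((BO j.1).filter (fun a => rep i.1 ∈ B a)).card : ZMod p)) :
    ∀ u ∈ Submodule.span (ZMod p) (Set.range colNF),
      ∀ w ∈ Submodule.span (ZMod p) (Set.range colNF), ∑ i, u i * w i = 0 := by
  intro u hu w hw
  refine dotProduct_eq_zero_of_mem_span (fun j s => ?_) hu hw
  have hdvd := dvd_sum_incidenceCount_mul_of_quasiSymmetric (ρ := G.subtype) hσ hk hqs hxy.le hpω
    hpyx hpkx hPOorb hPOcov hPOdisj hPOsize hrep (hBOorb j) (hBOorb s) j.2 s.2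
  rw [← ZMod.natCast_eq_zero_iff, Nat.cast_sum, sum_subtype _ mem_filter_univ] at hdvd
  simpa only [dotProduct, hcol, incidenceCount, Nat.cast_mul] using hdvd

/-- Let `G` be an automorphism group of a quasi-symmetric design with block
intersection numbers `x < y`, acting with some fixed points, some fixed blocks, and
all other point and block orbits of the same size `ω` (every orbit has size 1 or `ω`).
If a prime `p` divides `ω`, `y − x` and `k − x`, then the columns of the non-fixed
part of the point orbit matrix span a self-orthogonal code over `F_p`. -/
theorem stmt14 (v b m n k lam x y ω p : ℕ) (hp : p.Prime) (hxy : x < y)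
    (hpω : p ∣ ω) (hpyx : p ∣ y - x) (hpkx : p ∣ k - x)
    (B : Fin b → Finset (Fin v))
    (hk : ∀ a, (B a).card = k)
    (hlam : ∀ q q' : Fin v, q ≠ q' →
      (Finset.univ.filter (fun a => q ∈ B a ∧ q' ∈ B a)).card = lam)
    (hqs : ∀ a a', a ≠ a' → (B a ∩ B a').card = x ∨ (B a ∩ B a').card = y)
    (G : Subgroup (Equiv.Perm (Fin v)))
    (σ : G →* Equiv.Perm (Fin b))
    (hσ : ∀ (g : G) (a : Fin b), B (σ g a) = (B a).image (g : Equiv.Perm (Fin v)))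
    (PO : Fin m → Finset (Fin v))
    (hPOorb : ∀ i, ∃ pt, ∀ q, q ∈ PO i ↔ ∃ g : G, (g : Equiv.Perm (Fin v)) pt = q)
    (hPOcov : ∀ pt, ∃ i, pt ∈ PO i)
    (hPOdisj : ∀ i i', i ≠ i' → Disjoint (PO i) (PO i'))
    (hPOsize : ∀ i, (PO i).card = 1 ∨ (PO i).card = ω)
    (BO : Fin n → Finset (Fin b))
    (hBOorb : ∀ j, ∃ a, ∀ c, c ∈ BO j ↔ ∃ g : G, σ g a = c)
    (hBOcov : ∀ a, ∃ j, a ∈ BO j)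
    (hBOdisj : ∀ j j', j ≠ j' → Disjoint (BO j) (BO j'))
    (hBOsize : ∀ j, (BO j).card = 1 ∨ (BO j).card = ω)
    (rep : Fin m → Fin v) (hrep : ∀ i, rep i ∈ PO i)
    (colNF : {j : Fin n // (BO j).card = ω} →
      ({i : Fin m // (PO i).card = ω} → ZMod p))
    (hcol : ∀ j i, colNF j i =
      (((BO j.1).filter (fun a => rep i.1 ∈ B a)).card : ZMod p)) :
    ∀ u ∈ Submodule.span (ZMod p) (Set.range colNF),
      ∀ w ∈ Submodule.span (ZMod p) (Set.range colNF), ∑ i, u i * w i = 0 :=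
  stmt14_general v b m n k x y ω p hxy hpω hpyx hpkx B hk hqs G σ hσ PO hPOorb hPOcov hPOdisj
    hPOsize BO hBOorb rep hrep colNF hcol
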